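/- arXiv:2003.01272 — 3 statements merged into one kernel-verified Lean document; each statement's English description precedes it below -/
import Mathlib

section
/- If ⟨Tₙ : n < ω⟩ is a countable sequence of Kurepa trees and μ is a cardinal of cofinality ω such that the cardinalities |B(Tₙ)| are cofinal in μ (each is < μ and their supremum is μ), then there is a Kurepa tree whose set of cofinal branches has cardinality exactly μ. -/
open Cardinal

/-- The first uncountable ordinal ω₁. -/
noncomputable def omega1 : Ordinal.{0} := (Cardinal.aleph 1).ord

/-- `heightIs x α` : the set of predecessors of `x` has order type `α`
(in particular it is well-ordered). -/
def heightIs {T : Type} [PartialOrder T] (x : T) (α : Ordinal.{0}) : Prop :=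
  Nonempty ({y : T // y < x} ≃o Set.Iio α)

/-- `T` is a tree of height ω₁ : every point has a well-ordered set of predecessors of
some order type `< ω₁`, and every level `< ω₁` is nonempty. -/
def IsTreeOfHeightOmega1 (T : Type) [PartialOrder T] : Prop :=
  (∀ x : T, ∃ α < omega1, heightIs x α) ∧ ∀ α < omega1, ∃ x : T, heightIs x α

/-- all levels of `T` are countable -/
def CountableLevels (T : Type) [PartialOrder T] : Prop :=
  ∀ α : Ordinal.{0}, {x : T | heightIs x α}.Countable

/-- A cofinal branch: a chain of order type ω₁. -/
def IsCofinalBranch {T : Type} [PartialOrder T] (B : Set T) : Prop :=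
  IsChain (· ≤ ·) B ∧ Nonempty (B ≃o Set.Iio omega1)

/-- The cardinality of the set of cofinal branches of `T`. -/
noncomputable def branchCard (T : Type) [PartialOrder T] : Cardinal :=
  Cardinal.mk {B : Set T // IsCofinalBranch B}

/-- A Kurepa tree: a tree of height ω₁, all levels countable, with more than ω₁-many
cofinal branches. -/
def IsKurepaTree (T : Type) [PartialOrder T] : Prop :=
  IsTreeOfHeightOmega1 T ∧ CountableLevels T ∧ Cardinal.aleph 1 < branchCard T

/-!
The disjoint union of countably many trees of height ω₁ with countable levels is again such a
tree: heights are computed inside a single summand, so each level is a countable union of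
countable levels. A cofinal branch, being a chain, lies inside one summand, so the branches of the
union are the disjoint union of the branches of the summands. Hence the union has
`∑ₙ |B(Tₙ)| = supₙ |B(Tₙ)| = μ` cofinal branches, the sum collapsing to the supremum because
the supremum is at least `ℵ₁ > ℵ₀`.
-/

namespace OrderEmbedding

variable {α β : Type*} [Preorder α] [Preorder β]

noncomputable def imageOrderIso (e : α ↪o β) (s : Set α) : s ≃o e '' s where
  toEquiv := Equiv.Set.image e s e.injective
  map_rel_iff' := e.map_rel_iff

theorem image_Iio_of_isLowerSet_range (e : α ↪o β) (he : IsLowerSet (Set.range e)) (x : α) :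
    e '' Set.Iio x = Set.Iio (e x) := by
  refine subset_antisymm (Set.image_subset_iff.2 fun y hy => e.lt_iff_lt.2 hy) fun y hy => ?_
  obtain ⟨z, rfl⟩ := he (le_of_lt hy) (Set.mem_range_self x)
  exact ⟨z, e.lt_iff_lt.1 hy, rfl⟩

section Tree

variable {S T : Type} [PartialOrder S] [PartialOrder T]

theorem heightIs_apply_iff (e : S ↪o T) (he : IsLowerSet (Set.range e)) (x : S)
    (α : Ordinal.{0}) : heightIs (e x) α ↔ heightIs x α := by
  let φ : {y : S // y < x} ≃o {y : T // y < e x} :=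
    (e.imageOrderIso (Set.Iio x)).trans
      (OrderIso.setCongr _ _ (e.image_Iio_of_isLowerSet_range he x))
  exact ⟨fun ⟨ψ⟩ => ⟨φ.trans ψ⟩, fun ⟨ψ⟩ => ⟨φ.symm.trans ψ⟩⟩

theorem isCofinalBranch_image_iff (e : S ↪o T) (B : Set S) :
    IsCofinalBranch (e '' B) ↔ IsCofinalBranch B := by
  let φ := e.imageOrderIso B
  exact and_congr IsChain.image_relEmbedding_iff
    ⟨fun ⟨ψ⟩ => ⟨φ.trans ψ⟩, fun ⟨ψ⟩ => ⟨φ.symm.trans ψ⟩⟩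

end Tree

end OrderEmbedding

theorem IsCofinalBranch.nonempty {T : Type} [PartialOrder T] {B : Set T}
    (hB : IsCofinalBranch B) : B.Nonempty := by
  obtain ⟨ψ⟩ := hB.2
  have h0 : (0 : Ordinal) < omega1 := ord_pos.2 (aleph_pos 1)
  exact ⟨ψ.symm ⟨0, h0⟩, (ψ.symm ⟨0, h0⟩).2⟩

namespace Sigma

variable {ι : Type} {T : ι → Type} [∀ i, PartialOrder (T i)]

def mkOrderEmbedding (i : ι) : T i ↪o Σ i, T i :=
  OrderEmbedding.ofMapLEIff (Sigma.mk i) fun _ _ => mk_le_mk_iff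

theorem isLowerSet_range_mkOrderEmbedding (i : ι) :
    IsLowerSet (Set.range (mkOrderEmbedding (T := T) i)) := by
  rintro _ ⟨j, y⟩ hle ⟨x, rfl⟩
  obtain ⟨rfl : j = i, -⟩ := le_def.1 hle
  exact ⟨y, rfl⟩

theorem heightIs_mk_iff (i : ι) (x : T i) (α : Ordinal.{0}) :
    heightIs (⟨i, x⟩ : Σ i, T i) α ↔ heightIs x α :=
  (mkOrderEmbedding i).heightIs_apply_iff (isLowerSet_range_mkOrderEmbedding i) x α

theorem _root_.IsChain.subset_range_sigmaMk {C : Set (Σ i, T i)} (hC : IsChain (· ≤ ·) C)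
    {p : Σ i, T i} (hp : p ∈ C) : C ⊆ Set.range (mkOrderEmbedding p.1) := by
  rintro ⟨j, y⟩ hq
  have hj : j = p.1 := by
    rcases hC.total hq hp with h | h
    · exact (le_def.1 h).1
    · exact (le_def.1 h).1.symm
  subst hj
  exact ⟨y, rfl⟩

noncomputable def branchEquiv :
    (Σ i, {B : Set (T i) // IsCofinalBranch B}) ≃ {C : Set (Σ i, T i) // IsCofinalBranch C} := by
  refine Equiv.ofBijective (fun p => ⟨mkOrderEmbedding p.1 '' p.2.1,
    (OrderEmbedding.isCofinalBranch_image_iff _ _).2 p.2.2⟩) ⟨?_, ?_⟩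
  · rintro ⟨i, B, hB⟩ ⟨j, B', hB'⟩ h
    have hBB' : mkOrderEmbedding i '' B = mkOrderEmbedding j '' B' := congrArg Subtype.val h
    obtain ⟨x, hx⟩ := hB.nonempty
    obtain ⟨y, -, hxy⟩ := hBB' ▸ Set.mem_image_of_mem (mkOrderEmbedding i) hx
    obtain ⟨rfl : j = i, -⟩ := Sigma.mk.inj_iff.1 hxy
    obtain rfl : B = B' := (Set.image_injective.2 (mkOrderEmbedding _).injective) hBB'
    rfl
  · rintro ⟨C, hC⟩
    obtain ⟨p, hp⟩ := hC.nonempty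
    have hC_eq : mkOrderEmbedding p.1 '' (mkOrderEmbedding p.1 ⁻¹' C) = C :=
      Set.image_preimage_eq_of_subset (hC.1.subset_range_sigmaMk hp)
    exact ⟨⟨p.1, _, (OrderEmbedding.isCofinalBranch_image_iff _ _).1 (hC_eq ▸ hC)⟩, Subtype.ext hC_eq⟩

theorem branchCard_eq_sum : branchCard (Σ i, T i) = sum fun i => branchCard (T i) := by
  rw [branchCard, ← mk_congr branchEquiv, mk_sigma]
  rfl

theorem isTreeOfHeightOmega1 [Nonempty ι] (hT : ∀ i, IsTreeOfHeightOmega1 (T i)) :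
    IsTreeOfHeightOmega1 (Σ i, T i) := by
  refine ⟨fun ⟨i, x⟩ => ?_, fun α hα => ?_⟩
  · obtain ⟨α, hα, hx⟩ := (hT i).1 x
    exact ⟨α, hα, (heightIs_mk_iff i x α).2 hx⟩
  · obtain ⟨i⟩ := ‹Nonempty ι›
    obtain ⟨x, hx⟩ := (hT i).2 α hα
    exact ⟨⟨i, x⟩, (heightIs_mk_iff i x α).2 hx⟩

theorem countableLevels [Countable ι] (hT : ∀ i, CountableLevels (T i)) :
    CountableLevels (Σ i, T i) := by
  intro α
  refine (Set.countable_iUnion fun i => ((hT i) α).image (Sigma.mk i)).mono ?_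
  rintro ⟨i, x⟩ hx
  exact Set.mem_iUnion.2 ⟨i, x, (heightIs_mk_iff i x α).1 hx, rfl⟩

theorem isKurepaTree [Nonempty ι] [Countable ι] (hT : ∀ i, IsKurepaTree (T i)) :
    IsKurepaTree (Σ i, T i) := by
  refine ⟨isTreeOfHeightOmega1 fun i => (hT i).1, countableLevels fun i => (hT i).2.1, ?_⟩
  obtain ⟨i⟩ := ‹Nonempty ι›
  rw [branchCard_eq_sum]
  exact (hT i).2.2.trans_le (le_sum _ i)

end Sigma

theorem statement1_general (T : ℕ → Type) [∀ n, PartialOrder (T n)]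
    (hK : ∀ n, IsKurepaTree (T n))
    (μ : Cardinal)
    (hsup : (⨆ n, branchCard (T n)) = μ) :
    ∃ (S : Type) (_ : PartialOrder S), IsKurepaTree S ∧ branchCard S = μ := by
  refine ⟨Σ n, T n, inferInstance, Sigma.isKurepaTree hK, ?_⟩
  have hℵ₀_le : #ℕ ≤ ⨆ n, branchCard (T n) :=
    calc #ℕ = ℵ₀ := mk_nat
      _ ≤ ℵ₁ := aleph0_le_aleph 1
      _ ≤ branchCard (T 0) := (hK 0).2.2.le
      _ ≤ ⨆ n, branchCard (T n) := le_ciSup bddAbove_of_small 0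
  rw [Sigma.branchCard_eq_sum, sum_eq_iSup_of_mk_le_iSup mk_nat.ge hℵ₀_le, hsup]

/-- if `⟨Tₙ : n < ω⟩` is a countable sequence of Kurepa trees and `μ` is a
cardinal of cofinality ω such that the branch cardinalities `|B(Tₙ)|` are cofinal in `μ`
(each `< μ`, supremum `= μ`), then there is a Kurepa tree with exactly `μ`-many cofinal
branches. -/
theorem statement1 (T : ℕ → Type) [∀ n, PartialOrder (T n)]
    (hK : ∀ n, IsKurepaTree (T n))
    (μ : Cardinal) (hμ : μ.ord.cof = Cardinal.aleph0)
    (hlt : ∀ n, branchCard (T n) < μ)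
    (hsup : (⨆ n, branchCard (T n)) = μ) :
    ∃ (S : Type) (_ : PartialOrder S), IsKurepaTree S ∧ branchCard S = μ :=
  statement1_general T hK μ hsup
end

section
/- Let κ be an infinite cardinal and θ > κ a regular cardinal satisfying |α^{<κ}| < θ for all α < θ. If A is a family of sets with |A| ≥ θ and every member of A has cardinality < κ, then there is a subfamily D ⊆ A with |D| = θ forming a Δ-system: there is a kernel y such that x ∩ x' = y for all distinct x, x' ∈ D. -/
/-!
Replace a `θ`-sized subfamily of `A` by its injective image in the ordinal `θ` (any linear order of
cofinality `≥ θ` whose initial segments have size `< θ` does). By the hypothesis on `^<`, fewer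
than `θ` members lie below any given point. Hence there is a level `α` such that members whose
part above `α` is nonempty can have that part start arbitrarily high: otherwise a `κ`-sequence of
levels, each beyond the bound attached to the previous ones, would force a member reaching above
all of them to meet `κ` disjoint intervals. By Zorn this gives a `θ`-sized subfamily whose parts
above `α` are pairwise disjoint; their parts below `α` take fewer than `θ` values, so by
regularity `θ` of them share the same one, which is the kernel.
-/

open Cardinal Set

universe u

def IsDeltaSystem {α : Type*} (D : Set (Set α)) : Prop :=
  ∃ y, ∀ x ∈ D, ∀ x' ∈ D, x ≠ x' → x ∩ x' = y

namespace IsDeltaSystem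

variable {α β : Type*} {D : Set (Set α)}

theorem of_image {f : α → β} {U : Set α} (hf : InjOn f U) (hD : ∀ x ∈ D, x ⊆ U)
    (h : IsDeltaSystem (image f '' D)) : IsDeltaSystem D := by
  obtain ⟨y, hy⟩ := h
  refine ⟨f ⁻¹' y ∩ U, fun x hx x' hx' hne => ?_⟩
  have hne' : f '' x ≠ f '' x' := fun h => hne (hf.image (hD x hx) (hD x' hx') h)
  rw [← hy _ (mem_image_of_mem _ hx) _ (mem_image_of_mem _ hx') hne',
    ← hf.image_inter (hD x hx) (hD x' hx'),
    hf.preimage_image_inter (inter_subset_left.trans (hD x hx))]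

theorem exists_image_eq {f : α → β} {U : Set α} (hf : InjOn f U) {A : Set (Set α)}
    (hAU : ∀ x ∈ A, x ⊆ U) {D' : Set (Set β)} (hD'A : D' ⊆ image f '' A)
    (hD' : IsDeltaSystem D') : ∃ D ⊆ A, image f '' D = D' ∧ IsDeltaSystem D := by
  have hD : image f '' (A ∩ image f ⁻¹' D') = D' := by
    refine Subset.antisymm (fun _ ⟨x, hx, hxy⟩ => hxy ▸ hx.2) fun y hy => ?_
    obtain ⟨x, hx, rfl⟩ := hD'A hy
    exact ⟨x, ⟨hx, hy⟩, rfl⟩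
  exact ⟨_, inter_subset_left, hD, of_image hf (fun x hx => hAU x hx.1) (hD.symm ▸ hD')⟩

end IsDeltaSystem

theorem isDeltaSystem_of_pairwiseDisjoint_diff {α : Type*} {D : Set (Set α)} {T r : Set α}
    (hdisj : D.PairwiseDisjoint (· \ T)) (htrace : ∀ x ∈ D, x ∩ T = r) : IsDeltaSystem D := by
  refine ⟨r, fun x hx x' hx' hne => ?_⟩
  calc x ∩ x' = (x ∩ T) ∩ (x' ∩ T) ∪ (x \ T) ∩ (x' \ T) := by
        ext a; simp only [mem_union, mem_inter_iff, mem_sdiff]; tauto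
    _ = r := by
        rw [htrace x hx, htrace x' hx', (hdisj hx hx' hne).inter_eq, inter_self, union_empty]

theorem exists_mk_Iio_eq {κ μ : Cardinal.{u}} (h : μ < κ) : ∃ k : κ.ord.ToType, #(Iio k) = μ := by
  set k : κ.ord.ToType := Ordinal.ToType.mk ⟨μ.ord, mem_Iio.2 (ord_lt_ord.2 h)⟩
  have hk := Ordinal.card_typein (α := κ.ord.ToType) (r := (· < ·)) k
  rw [← Ordinal.ToType.mk_symm_apply_coe, RelIso.symm_apply_apply, card_ord] at hk
  exact ⟨k, hk.symm⟩

theorem mk_setOf_subset_mk_lt_lt {α : Type u} {κ θ : Cardinal.{u}} (hκ : ℵ₀ ≤ κ) (hκθ : κ < θ)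
    (hpow : ∀ μ < θ, μ ^< κ < θ) {s : Set α} (hs : #s < θ) :
    #{t : Set α | t ⊆ s ∧ #t < κ} < θ := by
  have hcover : {t : Set α | t ⊆ s ∧ #t < κ} ⊆
      ⋃ k : κ.ord.ToType, {t | t ⊆ s ∧ #t ≤ #(Iio k)} := by
    rintro t ⟨hts, ht⟩
    obtain ⟨k, hk⟩ := exists_mk_Iio_eq ht
    exact mem_iUnion.2 ⟨k, hts, hk.ge⟩
  have hpiece (k : κ.ord.ToType) : #{t | t ⊆ s ∧ #t ≤ #(Iio k)} ≤ max #s ℵ₀ ^< κ :=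
    (mk_bounded_subset_le s _).trans (le_powerlt _ (by simpa using mk_Iio_lt k))
  calc #{t : Set α | t ⊆ s ∧ #t < κ}
      ≤ #κ.ord.ToType * ⨆ k : κ.ord.ToType, #{t | t ⊆ s ∧ #t ≤ #(Iio k)} :=
        (mk_le_mk_of_subset hcover).trans (mk_iUnion_le _)
    _ ≤ κ * max #s ℵ₀ ^< κ := by
        rw [mk_ord_toType]; exact mul_le_mul_right (ciSup_le' hpiece) _
    _ < θ := mul_lt_of_lt (hκ.trans hκθ.le) hκθ (hpow _ (max_lt hs (hκ.trans_lt hκθ)))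

theorem exists_injOn_of_mk_le {α β : Type u} [Nonempty β] {s : Set α} (h : #s ≤ #β) :
    ∃ f : α → β, InjOn f s := by
  obtain ⟨g⟩ := h
  let f := Function.extend Subtype.val g fun _ => Classical.arbitrary β
  have hf (a : s) : f a = g a := Subtype.val_injective.extend_apply _ _ a
  exact ⟨f, fun a ha b hb hab => congrArg Subtype.val
    (g.injective ((hf ⟨a, ha⟩).symm.trans (hab.trans (hf ⟨b, hb⟩))))⟩

section LinearOrder

variable {ι : Type u} [LinearOrder ι] {κ θ : Cardinal.{u}}

theorem exists_forall_lt_of_mk_lt_cof {s : Set ι} (hs : #s < Order.cof ι) :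
    ∃ b, ∀ a ∈ s, a < b :=
  not_isCofinal_iff.1 fun h => (Order.cof_le h).not_gt hs

theorem exists_map_lt_of_mk_lt_cof (K : Type u) [LinearOrder K] [WellFoundedLT K]
    (hK : #K < Order.cof ι) (g : ι → ι) : ∃ c : K → ι, ∀ j k, j < k → g (c j) < c k := by
  have hsmall (k : K) (c : Iio k → ι) : #(range fun j => g (c j)) < Order.cof ι :=
    (mk_range_le.trans (mk_set_le _)).trans_lt hK
  choose ub hub using fun k c => exists_forall_lt_of_mk_lt_cof (hsmall k c)
  let c : K → ι := WellFoundedLT.fix fun k c => ub k fun j => c j j.2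
  refine ⟨c, fun j k hjk => ?_⟩
  rw [show c k = ub k fun j => c j from WellFoundedLT.fix_eq _ k]
  exact hub k _ _ ⟨⟨j, hjk⟩, rfl⟩

theorem exists_diff_Iio_nonempty_subset_Ici (hκ : ℵ₀ ≤ κ) (hκθ : κ < θ)
    (hpow : ∀ μ < θ, μ ^< κ < θ) (hcof : θ ≤ Order.cof ι) (hIio : ∀ a : ι, #(Iio a) < θ) {F : Set (Set ι)} (hF : θ ≤ #F)
    (hsmall : ∀ x ∈ F, #x < κ) :
    ∃ α, ∀ γ, ∃ x ∈ F, (x \ Iio α).Nonempty ∧ x \ Iio α ⊆ Ici γ := by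
  by_contra! h
  choose γ hγ using h
  have hK : #κ.ord.ToType < Order.cof ι := (mk_ord_toType κ ▸ hκθ).trans_le hcof
  obtain ⟨c, hc⟩ := exists_map_lt_of_mk_lt_cof κ.ord.ToType hK γ
  obtain ⟨β, hβ⟩ := exists_forall_lt_of_mk_lt_cof (mk_range_le.trans_lt hK)
  obtain ⟨x, hxF, hxβ⟩ : ∃ x ∈ F, ¬ x ⊆ Iio β := by
    by_contra! h
    have hFsub : F ⊆ {t | t ⊆ Iio β ∧ #t < κ} := fun x hx => ⟨h x hx, hsmall x hx⟩
    exact (hF.trans (mk_le_mk_of_subset hFsub)).not_gt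
      (mk_setOf_subset_mk_lt_lt hκ hκθ hpow (hIio β))
  obtain ⟨b, hbx, hbβ⟩ := not_subset.1 hxβ
  have hmeets (k : κ.ord.ToType) : ∃ a ∈ x, c k ≤ a ∧ a < γ (c k) := by
    obtain ⟨a, ⟨hax, hak⟩, haγ⟩ := not_subset.1 (hγ (c k) x hxF
      ⟨b, hbx, not_lt.2 ((hβ _ (mem_range_self k)).le.trans (not_lt.1 hbβ))⟩)
    exact ⟨a, hax, not_lt.1 hak, not_le.1 haγ⟩
  choose a hax hca haγ using hmeets
  have ha : StrictMono a := fun j k hjk => (haγ j).trans ((hc j k hjk).trans_le (hca k))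
  have hκx := mk_le_of_injective (f := fun k => (⟨a k, hax k⟩ : x))
    fun j k h => ha.injective (congrArg Subtype.val h)
  exact (hsmall x hxF).not_ge (mk_ord_toType κ ▸ hκx)

theorem exists_pairwiseDisjoint_diff_Iio (hθ : ℵ₀ ≤ θ) (hκθ : κ < θ) (hcof : θ ≤ Order.cof ι)
    {F : Set (Set ι)} (hsmall : ∀ x ∈ F, #x < κ) {α : ι}
    (hα : ∀ γ, ∃ x ∈ F, (x \ Iio α).Nonempty ∧ x \ Iio α ⊆ Ici γ) :
    ∃ G ⊆ F, θ ≤ #G ∧ G.PairwiseDisjoint (· \ Iio α) := by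
  obtain ⟨G, hG⟩ := zorn_subset {G | G ⊆ F ∧ G.PairwiseDisjoint (· \ Iio α)} fun C hCS hC =>
    ⟨⋃₀ C, ⟨sUnion_subset fun G hG => (hCS hG).1,
      (hC.pairwiseDisjoint_sUnion _).2 fun G hG => (hCS hG).2⟩, fun _ => subset_sUnion_of_mem⟩
  obtain ⟨hGF, hGdisj⟩ := hG.prop
  refine ⟨G, hGF, not_lt.1 fun hGθ => ?_, hGdisj⟩
  have hUθ : #(⋃₀ G) < θ := (mk_sUnion_le G).trans_lt (mul_lt_of_lt hθ hGθ
    ((ciSup_le' fun x : G => (hsmall x (hGF x.2)).le).trans_lt hκθ))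
  obtain ⟨γ, hγ⟩ := exists_forall_lt_of_mk_lt_cof (hUθ.trans_le hcof)
  obtain ⟨x, hxF, ⟨a, hax⟩, hxγ⟩ := hα γ
  have hxG : x ∉ G := fun hx => (hγ a (mem_sUnion_of_mem hax.1 hx)).not_ge (hxγ hax)
  refine hxG (hG.2 ⟨insert_subset hxF hGF, hGdisj.insert fun y hy _ => ?_⟩ (subset_insert x G)
    (mem_insert x G))
  exact Set.disjoint_left.2 fun b hbx hby =>
    (hγ b (mem_sUnion_of_mem hby.1 hy)).not_ge (hxγ hbx)

theorem exists_isDeltaSystem_of_le_cof (hθ : θ.IsRegular) (hκ : ℵ₀ ≤ κ) (hκθ : κ < θ)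
    (hpow : ∀ μ < θ, μ ^< κ < θ) (hcof : θ ≤ Order.cof ι) (hIio : ∀ a : ι, #(Iio a) < θ)
    {F : Set (Set ι)} (hF : θ ≤ #F) (hsmall : ∀ x ∈ F, #x < κ) :
    ∃ D ⊆ F, θ ≤ #D ∧ IsDeltaSystem D := by
  obtain ⟨α, hα⟩ := exists_diff_Iio_nonempty_subset_Ici hκ hκθ hpow hcof hIio hF hsmall
  obtain ⟨G, hGF, hGθ, hGdisj⟩ :=
    exists_pairwiseDisjoint_diff_Iio hθ.aleph0_le hκθ hcof hsmall hα
  let trace (x : G) : {t : Set ι | t ⊆ Iio α ∧ #t < κ} :=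
    ⟨x.1 ∩ Iio α, inter_subset_right,
      (mk_le_mk_of_subset inter_subset_left).trans_lt (hsmall _ (hGF x.2))⟩
  obtain ⟨r, D, hDG, hDθ, hDr⟩ := infinite_pigeonhole_set trace θ hGθ hθ.aleph0_le
    (by rw [hθ.cof_ord]; exact mk_setOf_subset_mk_lt_lt hκ hκθ hpow (hIio α))
  exact ⟨D, hDG.trans hGF, hDθ, isDeltaSystem_of_pairwiseDisjoint_diff (hGdisj.subset hDG)
    fun x hx => congrArg Subtype.val (hDr hx)⟩

end LinearOrder

/-- generalized Δ-system lemma: let `κ` be an infinite cardinal and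
`θ > κ` regular with `α ^< κ < θ` for all `α < θ` (where `α ^< κ` is the cardinality of
the set of `<κ`-sequences in `α`).  If `A` is a family of sets with `|A| ≥ θ` whose
members all have cardinality `< κ`, then some subfamily `D ⊆ A` with `|D| = θ` forms a
Δ-system: there is a kernel `y` with `x ∩ x' = y` for all distinct `x, x' ∈ D`. -/
theorem statement2 {X : Type} (κ θ : Cardinal)
    (hκ : Cardinal.aleph0 ≤ κ) (hθ : θ.IsRegular) (hκθ : κ < θ)
    (hpow : ∀ α < θ, α ^< κ < θ)
    (A : Set (Set X)) (hA : θ ≤ Cardinal.mk A)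
    (hsmall : ∀ x ∈ A, Cardinal.mk x < κ) :
    ∃ D ⊆ A, Cardinal.mk D = θ ∧
      ∃ y : Set X, ∀ x ∈ D, ∀ x' ∈ D, x ≠ x' → x ∩ x' = y := by
  obtain ⟨A', hA'A, hA'θ⟩ := le_mk_iff_exists_subset.1 hA
  have hU : #(⋃₀ A') ≤ #θ.ord.ToType := by
    rw [mk_ord_toType, ← mul_eq_self hθ.aleph0_le]
    refine (mk_sUnion_le A').trans (mul_le_mul' hA'θ.le (ciSup_le' fun x : A' => ?_))
    exact (hsmall x (hA'A x.2)).le.trans hκθ.le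
  have : Nonempty θ.ord.ToType := Ordinal.nonempty_toType_iff.2 hθ.ord_pos.ne'
  obtain ⟨f, hf⟩ := exists_injOn_of_mk_le hU
  have hA'U : ∀ x ∈ A', x ⊆ ⋃₀ A' := fun _ => subset_sUnion_of_mem
  have hfA' : InjOn (image f) A' := hf.image.mono hA'U
  obtain ⟨D', hD'F, hD'θ, hD'⟩ := exists_isDeltaSystem_of_le_cof hθ hκ hκθ hpow
    (by rw [Ordinal.cof_toType, hθ.cof_ord]) (fun a => by simpa using mk_Iio_lt a)
    (F := image f '' A') (by rw [mk_image_eq_of_injOn _ _ hfA', hA'θ])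
    (by rintro _ ⟨x, hx, rfl⟩; exact mk_image_le.trans_lt (hsmall x (hA'A hx)))
  obtain ⟨D, hDA', rfl, hD⟩ := hD'.exists_image_eq hf hA'U hD'F
  rw [mk_image_eq_of_injOn _ _ (hfA'.mono hDA')] at hD'θ
  exact ⟨D, hDA'.trans hA'A, (hA'θ ▸ mk_le_mk_of_subset hDA').antisymm hD'θ, hD⟩
end

section
/- Assume CH. Let Q_θ be the forcing whose conditions are triples p = (T_p, u_p, η̄_p) where T_p is a countable tree of height some δ < ω₁ on underlying set ω·δ with β-th level [ω·β, ω·(β+1)), every node of T_p has extensions to every level below δ, u_p ∈ [θ]^{≤ω}, and η̄_p = ⟨η_{p,α} : α ∈ u_p⟩ assigns to each α ∈ u_p a branch of T_p restricted below some successor ordinal ≤ δ; ordered by end-extension of trees and extension of branches. Then the countably supported product of ω₂-many copies of Q_θ (θ ranging over a set of cardinals of size at most continuum of ω₁-sized data) has the ω₂-chain condition. -/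
/-!
Under CH a countable tree on a countable ordinal, or a countable branch through one, can take
only `ℵ₁` values. So a condition of the product is a countable partial function from coordinates
(factors `θ` and pairs `(θ, α)`) into a set of size `ℵ₁`, and two conditions whose partial
functions agree on their common domain are compatible: keep the common trees and take the union
of the branch assignments.

Among `ℵ₂` such partial functions two agree; this replaces the Δ-system lemma. Embed the
coordinates into `ω₂` and call the restriction of a partial function below `β` its pattern; by CH
there are `ℵ₁` patterns below each `β < ω₂`. Suppose some `β` and pattern `P` are such that for
every `γ < ω₂` at least two members with pattern `P` avoid `[β, γ)`. Take one such member, then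
another avoiding `[β, γ)` for `γ` above the domain of the first: the two meet only below `β`,
where they agree. Otherwise every `(β, P)` comes with a threshold `γ(β, P)` and a single
exceptional member. Let `next β` be the supremum of the `γ(β, P)`; the closure points of `next`
are unbounded in `ω₂`, so there are `ℵ₁` of them, and a member avoiding the `ℵ₁` exceptions
attached to these meets each of the pairwise disjoint intervals `[δ, next δ)`, which its
countable domain cannot do.
-/

open Cardinal

/-- the level of the node `x` : nodes in `[ω·β, ω·(β+1))` form the `β`-th level. -/
noncomputable def olvl (x : Ordinal.{0}) : Ordinal.{0} := x / Ordinal.omega0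

/-- A condition of the forcing `Q_θ` : a triple `(T_p, u_p, η̄_p)` where `T_p` is a
countable tree of height `ht < ω₁` on the underlying set `ω·ht` whose `β`-th level is
`[ω·β, ω·(β+1))`, every node has extensions to every higher level below `ht` (normality),
`u` is a countable subset of `θ`, and `η` assigns to each `α ∈ u` a branch of the
restriction of `T_p` below some successor ordinal `≤ ht`. -/
structure QCond (θ : Cardinal.{0}) : Type 1 where
  ht : Ordinal.{0}
  ht_lt : ht < omega1
  tlt : Ordinal.{0} → Ordinal.{0} → Prop
  tlt_dom : ∀ x y, tlt x y → x < Ordinal.omega0 * ht ∧ y < Ordinal.omega0 * ht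
  tlt_trans : ∀ x y z, tlt x y → tlt y z → tlt x z
  tlt_level : ∀ x y, tlt x y → olvl x < olvl y
  tlt_pred : ∀ y, y < Ordinal.omega0 * ht → ∀ β < olvl y, ∃! x, tlt x y ∧ olvl x = β
  tlt_lin : ∀ x y z, tlt x z → tlt y z → olvl x < olvl y → tlt x y
  normal : ∀ x, x < Ordinal.omega0 * ht → ∀ β, olvl x ≤ β → β < ht →
    ∃ y, y < Ordinal.omega0 * ht ∧ olvl y = β ∧ (x = y ∨ tlt x y)
  u : Set Ordinal.{0}
  u_sub : u ⊆ Set.Iio θ.ord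
  u_count : u.Countable
  eta : Ordinal.{0} → Set Ordinal.{0}
  eta_dom : ∀ α, α ∉ u → eta α = ∅
  eta_branch : ∀ α ∈ u, ∃ γ : Ordinal.{0}, (∃ β, γ = β + 1) ∧ γ ≤ ht ∧
    (∀ β < γ, ∃! x, x ∈ eta α ∧ olvl x = β) ∧
    (∀ x ∈ eta α, x < Ordinal.omega0 * ht ∧ olvl x < γ) ∧
    (∀ x ∈ eta α, ∀ y ∈ eta α, olvl x < olvl y → tlt x y)

/-- the order of `Q_θ` : `q ≤ p` iff `T_q` end-extends `T_p` and every branch of `p`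
is extended by the corresponding branch of `q`. -/
def QCond.Le {θ : Cardinal.{0}} (q p : QCond θ) : Prop :=
  p.ht ≤ q.ht ∧
  (∀ x y, x < Ordinal.omega0 * p.ht → y < Ordinal.omega0 * p.ht →
    (q.tlt x y ↔ p.tlt x y)) ∧
  p.u ⊆ q.u ∧ ∀ α ∈ p.u, p.eta α ⊆ q.eta α

/-- A condition of the countably supported product `P_S = ∏_{θ ∈ S} Q_θ`. -/
structure PCond (S : Set Cardinal.{0}) : Type 1 where
  dom : Set Cardinal.{0}
  dom_sub : dom ⊆ S
  dom_count : dom.Countable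
  val : ∀ θ ∈ dom, QCond θ

/-- the (coordinatewise) order of the product. -/
def PCond.Le {S : Set Cardinal.{0}} (q p : PCond S) : Prop :=
  ∃ hsub : p.dom ⊆ q.dom,
    ∀ θ (h : θ ∈ p.dom), QCond.Le (q.val θ (hsub h)) (p.val θ h)


open Ordinal Set

universe u v

theorem continuum_lift_eq_aleph_one (hCH : (𝔠 : Cardinal.{u}) = ℵ₁) :
    (𝔠 : Cardinal.{max u v}) = ℵ₁ := by
  simpa using congrArg Cardinal.lift.{v} hCH

theorem mk_countable_subsets_le_aleph_one (hCH : (𝔠 : Cardinal.{u}) = ℵ₁) {α : Type u}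
    {B : Set α} (hB : #B ≤ ℵ₁) : #{s : Set α | s ⊆ B ∧ s.Countable} ≤ ℵ₁ := by
  have h := mk_bounded_subset_le B ℵ₀
  simp only [le_aleph0_iff_set_countable] at h
  calc #{s : Set α | s ⊆ B ∧ s.Countable} ≤ max #B ℵ₀ ^ ℵ₀ := h
    _ ≤ 𝔠 ^ ℵ₀ := power_le_power_right (max_le (hCH ▸ hB) aleph0_le_continuum)
    _ = ℵ₁ := by rw [continuum_power_aleph0, hCH]

theorem lt_aleph_two_iff {c : Cardinal.{u}} : c < ℵ_ 2 ↔ c ≤ ℵ₁ := by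
  rw [← one_add_one_eq_two, ← succ_aleph, Order.lt_succ_iff]

theorem cof_omega_two : (ω_ 2 : Ordinal.{u}).cof = ℵ_ 2 := by
  simpa [one_add_one_eq_two] using Cardinal.cof_omega_add_one (1 : Ordinal.{u})

theorem mk_Iio_le_aleph_one {β : Ordinal.{u}} (hβ : β < ω_ 2) : #(Iio β) ≤ ℵ₁ := by
  rw [Cardinal.mk_Iio_ordinal]
  simpa using lift_le.2 (lt_aleph_two_iff.1 (lt_omega_iff_card_lt.1 hβ))

theorem sSup_lt_omega_two {s : Set Ordinal.{u}} (hs : #s ≤ ℵ₁) (h : ∀ x ∈ s, x < ω_ 2) :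
    sSup s < ω_ 2 := by
  refine sSup_lt_of_lt_cof ?_ h
  simpa [cof_omega_two] using lt_aleph_two_iff.2 hs

theorem exists_closure_point_gt (f : Ordinal.{u} → Ordinal.{u}) (hf : ∀ β < ω_ 2, f β < ω_ 2)
    {γ : Ordinal.{u}} (hγ : γ < ω_ 2) : ∃ δ < ω_ 2, γ < δ ∧ ∀ β < δ, f β < δ := by
  set M : Ordinal.{u} → Ordinal.{u} := fun x => sSup ((fun β => f β + 1) '' Iio x)
  have hfM : ∀ x, ∀ β < x, f β < M x := fun x β hβ =>
    (Order.lt_add_one_iff.2 le_rfl).trans_le (le_csSup Ordinal.bddAbove_of_small ⟨β, hβ, rfl⟩)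
  have hM : ∀ x < ω_ 2, M x < ω_ 2 := fun x hx =>
    sSup_lt_omega_two (mk_image_le.trans (mk_Iio_le_aleph_one hx))
      (by rintro _ ⟨β, hβ, rfl⟩; exact (isSuccLimit_omega 2).add_one_lt (hf β (hβ.trans hx)))
  refine ⟨nfp M (γ + 1), nfp_lt_ord ?_ hM ((isSuccLimit_omega 2).add_one_lt hγ),
    (Order.lt_add_one_iff.2 le_rfl).trans_le (le_nfp M _), fun β hβ => ?_⟩
  · rw [cof_omega_two]; exact aleph0_lt_aleph_one.trans (aleph_lt_aleph.2 one_lt_two)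
  obtain ⟨n, hn⟩ := lt_nfp_iff.1 hβ
  calc f β < M (M^[n] (γ + 1)) := hfM _ β hn
    _ = M^[n + 1] (γ + 1) := (Function.iterate_succ_apply' M n _).symm
    _ ≤ nfp M (γ + 1) := iterate_le_nfp M _ _

theorem aleph_one_le_mk_closure_points (f : Ordinal.{u} → Ordinal.{u})
    (hf : ∀ β < ω_ 2, f β < ω_ 2) : ℵ₁ ≤ #{δ | δ < ω_ 2 ∧ ∀ β < δ, f β < δ} := by
  set C := {δ | δ < ω_ 2 ∧ ∀ β < δ, f β < δ}
  rw [aleph_one_le_iff]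
  by_contra! hC
  have hsup : sSup C < ω_ 2 :=
    sSup_lt_omega_two (hC.trans aleph0_lt_aleph_one.le) fun δ hδ => hδ.1
  obtain ⟨δ, hδ, hsupδ, hδC⟩ := exists_closure_point_gt f hf hsup
  exact (le_csSup (s := C) ⟨ω_ 2, fun x hx => hx.1.le⟩ ⟨hδ, hδC⟩).not_gt hsupδ

theorem countable_of_nonempty_inter_Ico {α : Type*} [LinearOrder α] {s W : Set α}
    (hs : s.Countable) {b : α → α} (hb : ∀ δ ∈ W, ∀ δ' ∈ W, δ < δ' → b δ ≤ δ')
    (hW : ∀ δ ∈ W, (s ∩ Ico δ (b δ)).Nonempty) : W.Countable := by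
  choose! x hx using hW
  have hlt : ∀ δ ∈ W, ∀ δ' ∈ W, δ < δ' → x δ < x δ' := fun δ hδ δ' hδ' h =>
    (hx δ hδ).2.2.trans_le ((hb δ hδ δ' hδ' h).trans (hx δ' hδ').2.1)
  refine MapsTo.countable_of_injOn (fun δ hδ => (hx δ hδ).1) (fun δ hδ δ' hδ' heq => ?_) hs
  by_contra hne
  rcases lt_or_gt_of_ne hne with h | h
  · exact (hlt δ hδ δ' hδ' h).ne heq
  · exact (hlt δ' hδ' δ hδ h).ne heq.symm

theorem exists_pattern_with_gaps {ι : Type u} {K : Type v} (hι : ℵ_ 2 ≤ #ι)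
    (y : ι → Set Ordinal.{u}) (hy : ∀ i, (y i).Countable) (pat : Ordinal.{u} → ι → K)
    (hpat : ∀ β < ω_ 2, #(range (pat β)) ≤ ℵ₁) :
    ∃ β < ω_ 2, ∃ P, ∀ γ < ω_ 2, ∀ i₀, ∃ i ≠ i₀, pat β i = P ∧ Disjoint (y i) (Ico β γ) := by
  have : Nonempty ι := mk_ne_zero_iff.1 (aleph0_pos.trans_le ((aleph0_le_aleph 2).trans hι)).ne'
  by_contra! h
  choose! Γ hΓ E hE using h
  set next : Ordinal.{u} → Ordinal.{u} := fun β => sSup (range (Γ β ∘ pat β))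
  have hnext : ∀ β < ω_ 2, next β < ω_ 2 := fun β hβ =>
    sSup_lt_omega_two (by simpa [range_comp] using
      (mk_image_le_lift (f := Γ β)).trans (lift_le.2 (hpat β hβ)))
      (by rintro _ ⟨i, rfl⟩; exact hΓ β hβ _)
  have hΓnext : ∀ β < ω_ 2, ∀ i, Γ β (pat β i) ≤ next β := fun β hβ i =>
    le_csSup ⟨ω_ 2, by rintro _ ⟨j, rfl⟩; exact (hΓ β hβ _).le⟩ ⟨i, rfl⟩
  obtain ⟨W, hWC, hW⟩ := le_mk_iff_exists_subset.1 (aleph_one_le_mk_closure_points next hnext)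
  set Ex : Set ι := ⋃ δ : W, range (E δ ∘ pat δ)
  obtain ⟨i, hi⟩ : ∃ i, i ∉ Ex := by
    by_contra! hall
    have hrange : ∀ δ : W, #(range (E δ ∘ pat δ)) ≤ ℵ₁ := fun δ => by
      simpa [range_comp] using (mk_image_le_lift (f := E δ)).trans (lift_le.2 (hpat δ (hWC δ.2).1))
    have hEx : Cardinal.lift.{u + 1} #Ex ≤ ℵ₁ := calc
      _ ≤ Cardinal.lift.{u} #W * ⨆ δ : W, Cardinal.lift.{u + 1} #(range (E δ ∘ pat δ)) :=
        mk_iUnion_le_lift _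
      _ ≤ ℵ₁ * ℵ₁ := mul_le_mul' (by simp [hW]) (ciSup_le' fun δ => by simpa using hrange δ)
      _ = ℵ₁ := mul_eq_self (aleph0_le_aleph 1)
    have hιEx : #ι ≤ #Ex := mk_univ.symm.le.trans (mk_le_mk_of_subset fun i _ => hall i)
    exact (hι.trans (hιEx.trans (by simpa using hEx))).not_gt (lt_aleph_two_iff.2 le_rfl)
  refine (lt_aleph_one_iff.2 (le_aleph0_iff_set_countable.2 ?_)).ne hW
  refine countable_of_nonempty_inter_Ico (hy i) (b := next)
    (fun δ hδ δ' hδ' h => ((hWC hδ').2 δ h).le) (fun δ hδ => ?_)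
  have hne : i ≠ E δ (pat δ i) := fun h => hi (mem_iUnion.2 ⟨⟨δ, hδ⟩, i, h.symm⟩)
  obtain ⟨x, hxy, hx⟩ := not_disjoint_iff.1 (hE δ (hWC hδ).1 _ i hne rfl)
  exact ⟨x, hxy, Ico_subset_Ico_right (hΓnext δ (hWC hδ).1 i) hx⟩

theorem exists_ne_eqOn_of_subset_Iio_omega_two (hCH : (𝔠 : Cardinal.{u + 1}) = ℵ₁)
    {ι V : Type u} (hι : ℵ_ 2 ≤ #ι) {V₀ : Set V} (hV₀ : #V₀ ≤ ℵ₁) (D : ι → Set Ordinal.{u})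
    (hD : ∀ i, (D i).Countable) (hDω : ∀ i, D i ⊆ Iio (ω_ 2)) (g : ι → Ordinal.{u} → V)
    (hg : ∀ i, MapsTo (g i) (D i) V₀) : ∃ i j, i ≠ j ∧ EqOn (g i) (g j) (D i ∩ D j) := by
  set pat : Ordinal.{u} → ι → Set (Ordinal.{u} × V) :=
    fun β i => (fun x => (x, g i x)) '' (D i ∩ Iio β)
  have hpat : ∀ β < ω_ 2, #(range (pat β)) ≤ ℵ₁ := by
    intro β hβ
    have hsub : range (pat β) ⊆ {s | s ⊆ Iio β ×ˢ V₀ ∧ s.Countable} := by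
      rintro _ ⟨i, rfl⟩
      exact ⟨by rintro _ ⟨x, hx, rfl⟩; exact ⟨hx.2, hg i hx.1⟩,
        ((hD i).mono inter_subset_left).image _⟩
    refine (mk_le_mk_of_subset hsub).trans (mk_countable_subsets_le_aleph_one hCH ?_)
    rw [mk_congr (Equiv.Set.prod _ _), mk_prod]
    calc _ ≤ (ℵ₁ : Cardinal.{u + 1}) * ℵ₁ :=
          mul_le_mul' (by simpa using mk_Iio_le_aleph_one hβ) (by simpa using hV₀)
      _ = ℵ₁ := mul_eq_self (aleph0_le_aleph 1)
  obtain ⟨β, -, P, hP⟩ := exists_pattern_with_gaps hι D hD pat hpat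
  obtain ⟨i₀⟩ : Nonempty ι :=
    mk_ne_zero_iff.1 (aleph0_pos.trans_le ((aleph0_le_aleph 2).trans hι)).ne'
  obtain ⟨i, -, hi, -⟩ := hP 0 (isSuccLimit_omega 2).bot_lt i₀
  set γ := sSup (D i) + 1
  have hDi : ∀ x ∈ D i, x < γ := fun x hx =>
    Order.lt_add_one_iff.2 (le_csSup ⟨ω_ 2, fun y hy => (hDω i hy).le⟩ hx)
  have hγ : γ < ω_ 2 := (isSuccLimit_omega 2).add_one_lt
    (sSup_lt_omega_two (le_aleph0_iff_set_countable.2 (hD i) |>.trans aleph0_lt_aleph_one.le)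
      (hDω i))
  obtain ⟨j, hji, hj, hdisj⟩ := hP γ hγ i
  refine ⟨j, i, hji, fun x hx => ?_⟩
  have hxβ : x < β := by
    by_contra! h
    exact disjoint_left.1 hdisj hx.1 ⟨h, hDi x hx.2⟩
  have hmem : (x, g i x) ∈ pat β j := hj ▸ hi ▸ ⟨x, ⟨hx.2, hxβ⟩, rfl⟩
  obtain ⟨x', -, hx'⟩ := hmem
  obtain ⟨rfl, hgx⟩ := Prod.mk.inj hx'
  exact hgx

theorem exists_injOn_mapsTo_Iio_ord {X : Type u} {U : Set X} {c : Cardinal.{u}} (hU : #U ≤ c) :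
    ∃ o : X → Ordinal.{u}, InjOn o U ∧ MapsTo o U (Iio c.ord) := by
  classical
  obtain ⟨e⟩ : Nonempty (U ↪ Iio c.ord) := lift_mk_le'.1 (by simpa [Cardinal.mk_Iio_ordinal])
  refine ⟨fun x => if h : x ∈ U then e ⟨x, h⟩ else 0, fun x hx y hy hxy => ?_, fun x hx => ?_⟩
  · simp only [hx, hy, dite_true] at hxy
    exact congrArg Subtype.val (e.injective (Subtype.ext hxy))
  · simp only [hx, dite_true]
    exact (e ⟨x, hx⟩).2

theorem exists_ne_eqOn_of_aleph_two_le (hCH : (𝔠 : Cardinal.{u}) = ℵ₁) {ι X V : Type u}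
    (hι : ℵ_ 2 ≤ #ι) {V₀ : Set V} (hV₀ : #V₀ ≤ ℵ₁) (D : ι → Set X) (hD : ∀ i, (D i).Countable)
    (g : ι → X → V) (hg : ∀ i, MapsTo (g i) (D i) V₀) :
    ∃ i j, i ≠ j ∧ EqOn (g i) (g j) (D i ∩ D j) := by
  rcases isEmpty_or_nonempty X with hX | hX
  · have : Nontrivial ι :=
      one_lt_iff_nontrivial.1 (one_lt_aleph0.trans_le ((aleph0_le_aleph 2).trans hι))
    obtain ⟨i, j, hij⟩ := exists_pair_ne ι
    exact ⟨i, j, hij, fun x => isEmptyElim x⟩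
  obtain ⟨J, -, hJ⟩ := le_mk_iff_exists_subset.1 (hι.trans_eq mk_univ.symm)
  set U := ⋃ j : J, D j
  have hU : #U ≤ ℵ_ 2 := calc
    #U ≤ #J * ⨆ j : J, #(D j) := mk_iUnion_le _
    _ ≤ ℵ_ 2 * ℵ_ 2 := mul_le_mul' hJ.le (ciSup_le' fun j =>
      (le_aleph0_iff_set_countable.2 (hD j)).trans (aleph0_le_aleph 2))
    _ = ℵ_ 2 := mul_eq_self (aleph0_le_aleph 2)
  obtain ⟨o, ho, hoω⟩ := exists_injOn_mapsTo_Iio_ord hU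
  rw [ord_aleph] at hoω
  have hDU : ∀ j : J, D j ⊆ U := fun j => subset_iUnion (fun j : J => D j) j
  have hinv : ∀ j : J, ∀ x ∈ D j, Function.invFunOn o U (o x) = x := fun j x hx =>
    ho.leftInvOn_invFunOn (hDU j hx)
  obtain ⟨i, j, hij, hEq⟩ := exists_ne_eqOn_of_subset_Iio_omega_two
    (continuum_lift_eq_aleph_one.{u, u + 1} hCH) (hι := hJ.ge) hV₀ (fun j => o '' D j)
    (fun j => (hD j).image o) (fun j => (hoω.mono_left (hDU j)).image_subset)
    (fun j => g j ∘ Function.invFunOn o U)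
    (fun j => by rintro _ ⟨x, hx, rfl⟩; simpa [hinv j x hx] using hg j hx)
  refine ⟨i, j, Subtype.coe_injective.ne hij, fun x hx => ?_⟩
  simpa [hinv i x hx.1, hinv j x hx.2] using hEq ⟨mem_image_of_mem o hx.1, mem_image_of_mem o hx.2⟩

theorem omega0_mul_lt_omega1 {h : Ordinal.{0}} (hh : h < omega1) : ω * h < omega1 :=
  isPrincipal_mul_ord (aleph0_le_aleph 1) (by simp) hh

theorem countable_Iio_of_lt_omega1 {o : Ordinal.{0}} (ho : o < omega1) : (Iio o).Countable := by
  rw [← le_aleph0_iff_set_countable, Cardinal.mk_Iio_ordinal, lift_le_aleph0]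
  exact lt_aleph_one_iff.1 (lt_ord.1 ho)

namespace QCond

variable {θ : Cardinal.{0}}

theorem le_refl (p : QCond θ) : p.Le p :=
  ⟨le_rfl, fun _ _ _ _ => Iff.rfl, subset_rfl, fun _ _ => subset_rfl⟩

theorem graph_subset (p : QCond θ) :
    {x : Ordinal × Ordinal | p.tlt x.1 x.2} ⊆ Iio (ω * p.ht) ×ˢ Iio (ω * p.ht) :=
  fun x hx => p.tlt_dom x.1 x.2 hx

theorem eta_subset (p : QCond θ) (α : Ordinal) : p.eta α ⊆ Iio (ω * p.ht) := by
  by_cases hα : α ∈ p.u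
  · obtain ⟨γ, -, -, -, hlt, -⟩ := p.eta_branch α hα
    exact fun x hx => (hlt x hx).1
  · simp [p.eta_dom α hα]

def Agree (p q : QCond θ) : Prop :=
  p.ht = q.ht ∧ p.tlt = q.tlt ∧ ∀ α ∈ p.u, α ∈ q.u → p.eta α = q.eta α

def merge (p q : QCond θ) (h : p.Agree q) : QCond θ where
  ht := p.ht
  ht_lt := p.ht_lt
  tlt := p.tlt
  tlt_dom := p.tlt_dom
  tlt_trans := p.tlt_trans
  tlt_level := p.tlt_level
  tlt_pred := p.tlt_pred
  tlt_lin := p.tlt_lin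
  normal := p.normal
  u := p.u ∪ q.u
  u_sub := union_subset p.u_sub q.u_sub
  u_count := p.u_count.union q.u_count
  eta α := p.eta α ∪ q.eta α
  eta_dom α hα := by
    rw [p.eta_dom α (fun h => hα (Or.inl h)), q.eta_dom α (fun h => hα (Or.inr h)), union_empty]
  eta_branch α hα := by
    obtain ⟨hht, htlt, heta⟩ := h
    by_cases hp : α ∈ p.u
    · have hqp : q.eta α ⊆ p.eta α := by
        by_cases hq : α ∈ q.u
        · rw [heta α hp hq]
        · simp [q.eta_dom α hq]
      rw [union_eq_self_of_subset_right hqp]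
      exact p.eta_branch α hp
    · rw [p.eta_dom α hp, empty_union, hht, htlt]
      exact q.eta_branch α (hα.resolve_left hp)

theorem merge_le_left (p q : QCond θ) (h : p.Agree q) : (p.merge q h).Le p :=
  ⟨le_rfl, fun _ _ _ _ => Iff.rfl, subset_union_left, fun _ _ => subset_union_left⟩

theorem merge_le_right (p q : QCond θ) (h : p.Agree q) : (p.merge q h).Le q :=
  ⟨h.1.ge, fun x y _ _ => iff_of_eq (congrFun (congrFun h.2.1 x) y), subset_union_right,
    fun _ _ => subset_union_right⟩

end QCond

/-- A coordinate of the product is either a factor `Sum.inl θ` or a branch `Sum.inr (θ, α)` of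
that factor; a condition carries a tree (height and order) at the former, a branch at the latter. -/
abbrev Code := (Ordinal.{0} × Set (Ordinal.{0} × Ordinal.{0})) ⊕ Set Ordinal.{0}

def codeSpace : Set Code :=
  Sum.inl '' (Iio omega1 ×ˢ {s | s ⊆ Iio omega1 ×ˢ Iio omega1 ∧ s.Countable}) ∪
    Sum.inr '' {s | s ⊆ Iio omega1 ∧ s.Countable}

theorem mk_codeSpace_le (hCH : (𝔠 : Cardinal.{1}) = ℵ₁) : #codeSpace ≤ ℵ₁ := by
  have hω₁ : #(Iio omega1) ≤ ℵ₁ := by simp [Cardinal.mk_Iio_ordinal, omega1]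
  have hpairs : #(Iio omega1 ×ˢ Iio omega1) ≤ ℵ₁ := by
    rw [mk_congr (Equiv.Set.prod _ _), mk_prod]
    simpa [mul_eq_self (aleph0_le_aleph 1)] using mul_le_mul' hω₁ hω₁
  calc #codeSpace ≤ #(Iio omega1) * #{s | s ⊆ Iio omega1 ×ˢ Iio omega1 ∧ s.Countable} +
        #{s | s ⊆ Iio omega1 ∧ s.Countable} := by
        refine (mk_union_le _ _).trans (add_le_add (mk_image_le.trans ?_) mk_image_le)
        rw [mk_congr (Equiv.Set.prod _ _), mk_prod, Cardinal.lift_id, Cardinal.lift_id]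
    _ ≤ ℵ₁ * ℵ₁ + ℵ₁ := add_le_add (mul_le_mul' hω₁ (mk_countable_subsets_le_aleph_one hCH hpairs))
        (mk_countable_subsets_le_aleph_one hCH hω₁)
    _ = ℵ₁ := by rw [mul_eq_self (aleph0_le_aleph 1), add_eq_self (aleph0_le_aleph 1)]

namespace PCond

variable {S : Set Cardinal.{0}}

theorem exists_le_le_of_agree {P Q : PCond S}
    (h : ∀ θ (hp : θ ∈ P.dom) (hq : θ ∈ Q.dom), (P.val θ hp).Agree (Q.val θ hq)) :
    ∃ R : PCond S, R.Le P ∧ R.Le Q := by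
  classical
  let R : PCond S :=
    { dom := P.dom ∪ Q.dom
      dom_sub := union_subset P.dom_sub Q.dom_sub
      dom_count := P.dom_count.union Q.dom_count
      val := fun θ hθ =>
        if hp : θ ∈ P.dom then
          if hq : θ ∈ Q.dom then (P.val θ hp).merge (Q.val θ hq) (h θ hp hq) else P.val θ hp
        else Q.val θ (hθ.resolve_left hp) }
  refine ⟨R, ⟨subset_union_left, fun θ hp => ?_⟩, ⟨subset_union_right, fun θ hq => ?_⟩⟩
  · by_cases hq : θ ∈ Q.dom
    · simpa [R, hp, hq] using QCond.merge_le_left _ _ (h θ hp hq)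
    · simpa [R, hp, hq] using (P.val θ hp).le_refl
  · by_cases hp : θ ∈ P.dom
    · simpa [R, hp, hq] using QCond.merge_le_right _ _ (h θ hp hq)
    · simpa [R, hp, hq] using (Q.val θ hq).le_refl

def support (P : PCond S) : Set (Cardinal.{0} ⊕ Cardinal.{0} × Ordinal.{0}) :=
  Sum.inl '' P.dom ∪ Sum.inr '' ⋃ θ : P.dom, {θ.1} ×ˢ (P.val θ θ.2).u

theorem support_countable (P : PCond S) : P.support.Countable := by
  have : Countable P.dom := P.dom_count.to_subtype
  exact (P.dom_count.image _).union ((countable_iUnion fun θ : P.dom =>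
    (countable_singleton _).prod (P.val θ θ.2).u_count).image _)

open Classical in
noncomputable def code (P : PCond S) : Cardinal.{0} ⊕ Cardinal.{0} × Ordinal.{0} → Code
  | .inl θ => if h : θ ∈ P.dom then .inl ((P.val θ h).ht, {x | (P.val θ h).tlt x.1 x.2})
      else .inl (0, ∅)
  | .inr (θ, α) => if h : θ ∈ P.dom then .inr ((P.val θ h).eta α) else .inr ∅

theorem mapsTo_code (P : PCond S) : MapsTo P.code P.support codeSpace := by
  have hsub : ∀ θ (h : θ ∈ P.dom), Iio (ω * (P.val θ h).ht) ⊆ Iio omega1 := fun θ h =>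
    Iio_subset_Iio (omega0_mul_lt_omega1 (P.val θ h).ht_lt).le
  have hcount : ∀ θ (h : θ ∈ P.dom), (Iio (ω * (P.val θ h).ht)).Countable := fun θ h =>
    countable_Iio_of_lt_omega1 (omega0_mul_lt_omega1 (P.val θ h).ht_lt)
  rintro _ (⟨θ, h, rfl⟩ | ⟨⟨θ, α⟩, hθα, rfl⟩)
  · refine Or.inl ⟨((P.val θ h).ht, {x | (P.val θ h).tlt x.1 x.2}), ⟨(P.val θ h).ht_lt, ?_, ?_⟩,
      by simp [code, h]⟩
    · exact (P.val θ h).graph_subset.trans (prod_mono (hsub θ h) (hsub θ h))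
    · exact ((hcount θ h).prod (hcount θ h)).mono (P.val θ h).graph_subset
  · obtain ⟨⟨θ', h⟩, ⟨rfl : θ = θ', -⟩⟩ := mem_iUnion.1 hθα
    refine Or.inr ⟨(P.val θ h).eta α, ⟨((P.val θ h).eta_subset α).trans (hsub θ h),
      (hcount θ h).mono ((P.val θ h).eta_subset α)⟩, by simp [code, h]⟩

theorem agree_of_eqOn_code {P Q : PCond S} (hPQ : EqOn P.code Q.code (P.support ∩ Q.support))
    (θ : Cardinal.{0}) (hp : θ ∈ P.dom) (hq : θ ∈ Q.dom) : (P.val θ hp).Agree (Q.val θ hq) := by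
  have htree := hPQ ⟨Or.inl ⟨θ, hp, rfl⟩, Or.inl ⟨θ, hq, rfl⟩⟩
  simp only [code, hp, hq, dite_true, Sum.inl.injEq, Prod.mk.injEq] at htree
  refine ⟨htree.1, funext₂ fun x y => propext (Set.ext_iff.1 htree.2 (x, y)), fun α hαp hαq => ?_⟩
  have hmem : ∀ (R : PCond S) (h : θ ∈ R.dom), α ∈ (R.val θ h).u → .inr (θ, α) ∈ R.support :=
    fun R h hα => Or.inr ⟨(θ, α), mem_iUnion.2 ⟨⟨θ, h⟩, rfl, hα⟩, rfl⟩
  have heta := hPQ ⟨hmem P hp hαp, hmem Q hq hαq⟩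
  simpa [code, hp, hq] using heta

end PCond

/-- assume CH.  The countably supported product of the forcings `Q_θ`
(`θ` ranging over a set `S` of cardinals) has the ω₂-chain condition: every antichain
has size `< ω₂`. -/
theorem statement3 (hCH : (2 : Cardinal.{0}) ^ Cardinal.aleph0 = Cardinal.aleph 1)
    (S : Set Cardinal.{0}) (A : Set (PCond S))
    (hanti : ∀ p ∈ A, ∀ q ∈ A, p ≠ q → ¬ ∃ r : PCond S, PCond.Le r p ∧ PCond.Le r q) :
    Cardinal.mk A < (Cardinal.aleph 2 : Cardinal.{1}) := by
  by_contra! hA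
  have hCH₁ : (𝔠 : Cardinal.{1}) = ℵ₁ :=
    continuum_lift_eq_aleph_one.{0, 1} (by rwa [← two_power_aleph0])
  obtain ⟨p, q, hpq, hcode⟩ := exists_ne_eqOn_of_aleph_two_le hCH₁ hA (mk_codeSpace_le hCH₁)
    (fun p => p.1.support) (fun p => p.1.support_countable) (fun p => p.1.code)
    (fun p => p.1.mapsTo_code)
  exact hanti p p.2 q q.2 (Subtype.coe_injective.ne hpq)
    (PCond.exists_le_le_of_agree (PCond.agree_of_eqOn_code hcode))
end
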